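/- (Lemma 4.2, combinatorial mapping from Blume-Capel to Ising.) Let G=(V,E) be a finite subgraph of Z^d, β>0, Δ∈ℝ, and ξ ∈ {-1,0,+1}^{Z^d}. Let μ^{Ising,ℓ(ξ)}_{ℓ(G),J} denote the Ising measure on the lifted graph ℓ(G) with boundary condition ℓ(ξ) and coupling constants J_{uv} = β/4 for uv ∈ E₁ and J_{uv} = (Δ + log 2)/2 for uv ∈ E₂. Then for every η ∈ {-1,0,1}^V, μ^ξ_{G,β,Δ}(σ = η) = μ^{Ising,ℓ(ξ)}_{ℓ(G),J}(τ ∈ T^{-1}(η)). -/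

import Mathlib

open Filter Topology

namespace BCIsing

abbrev Vtx (d : ℕ) := Fin d → ℤ

/-- Nearest-neighbour adjacency on `ℤ^d` (ℓ¹-distance one). -/
def adj {d : ℕ} (x y : Vtx d) : Prop := (∑ i, (x i - y i).natAbs) = 1

instance {d : ℕ} (x : Vtx d) : DecidablePred (adj x) := fun y => by
  unfold adj; infer_instance

/-- The finite set of lattice neighbours of `x`. -/
noncomputable def nbrs {d : ℕ} (x : Vtx d) : Finset (Vtx d) :=
  (Fintype.piFinset fun i => Finset.Icc (x i - 1) (x i + 1)).filter (adj x)

/-- Spins: `0, 1, 2 : Fin 3` encode the values `-1, 0, +1`. -/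
abbrev Spin := Fin 3

/-- The real value of a spin. -/
def sval (s : Spin) : ℝ := ((s : ℕ) : ℝ) - 1

/-- The box `[-n,n]^d ∩ ℤ^d`. -/
noncomputable def box (d n : ℕ) : Finset (Vtx d) :=
  Fintype.piFinset fun _ => Finset.Icc (-(n : ℤ)) n

/-- Extension of `f` on `Λ` by the boundary condition `η` outside of `Λ`. -/
def ext {d : ℕ} (Λ : Finset (Vtx d)) (η : Vtx d → Spin) (f : ↥Λ → Spin) : Vtx d → Spin :=
  fun x => if h : x ∈ Λ then f ⟨x, h⟩ else η x

/-- Blume–Capel Boltzmann weight of the configuration `f` in volume `Λ` with boundary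
condition `η`:  `exp(β Σ_{xy∈E(Λ)} σ_x σ_y + Δ Σ_{x∈Λ} σ_x² + β Σ_{x∈Λ,y∉Λ,x∼y} σ_x η_y)`
(every interior edge is counted once, whence the factor `β/2` in the double sum). -/
noncomputable def wt {d : ℕ} (Λ : Finset (Vtx d)) (β Δ : ℝ) (η : Vtx d → Spin)
    (f : ↥Λ → Spin) : ℝ :=
  Real.exp (β / 2 * ∑ x ∈ Λ, ∑ y ∈ nbrs x ∩ Λ, sval (ext Λ η f x) * sval (ext Λ η f y)
    + Δ * ∑ x ∈ Λ, sval (ext Λ η f x) ^ 2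
    + β * ∑ x ∈ Λ, ∑ y ∈ nbrs x \ Λ, sval (ext Λ η f x) * sval (η y))

/-- Finite-volume Blume–Capel expectation of the observable `g` in volume `Λ`
with boundary condition `η`. -/
noncomputable def finExp {d : ℕ} (Λ : Finset (Vtx d)) (β Δ : ℝ) (η : Vtx d → Spin)
    (g : (Vtx d → Spin) → ℝ) : ℝ :=
  (∑ f : ↥Λ → Spin, g (ext Λ η f) * wt Λ β Δ η f) / ∑ f : ↥Λ → Spin, wt Λ β Δ η f

/-- The plus boundary condition `η ≡ +1`. -/
def plusBC {d : ℕ} : Vtx d → Spin := fun _ => 2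

/-- The free (zero) boundary condition `η ≡ 0`. -/
def freeBC {d : ℕ} : Vtx d → Spin := fun _ => 1

/-- A local observable: one depending on finitely many spins. -/
def IsLocal {d : ℕ} (g : (Vtx d → Spin) → ℝ) : Prop :=
  ∃ S : Finset (Vtx d), ∀ σ σ' : Vtx d → Spin, (∀ x ∈ S, σ x = σ' x) → g σ = g σ'

/-- `E` is the infinite-volume plus-state expectation functional `⟨·⟩⁺_{β,Δ}`:
the weak limit, as `Λ ↑ ℤ^d`, of finite-volume plus-boundary-condition expectations. -/
def IsPlusState {d : ℕ} (E : ℝ → ℝ → ((Vtx d → Spin) → ℝ) → ℝ) : Prop :=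
  ∀ β Δ : ℝ, 0 < β → ∀ g : (Vtx d → Spin) → ℝ, IsLocal g →
    Tendsto (fun n => finExp (box d n) β Δ plusBC g) atTop (nhds (E β Δ g))

/-- The spin at the origin, `σ₀`. -/
noncomputable def spin0 {d : ℕ} : (Vtx d → Spin) → ℝ := fun σ => sval (σ 0)

/-- The critical inverse temperature `β_c(Δ) = inf{β>0 : ⟨σ₀⟩⁺_{β,Δ} > 0}`. -/
noncomputable def betaC {d : ℕ} (E : ℝ → ℝ → ((Vtx d → Spin) → ℝ) → ℝ) (Δ : ℝ) : ℝ :=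
  sInf {β : ℝ | 0 < β ∧ 0 < E β Δ (spin0 (d := d))}

/-- The sup-norm `‖x‖_∞` of a lattice point, as a real number. -/
noncomputable def normInf {d : ℕ} (x : Vtx d) : ℝ :=
  ((Finset.univ.sup fun i => (x i).natAbs : ℕ) : ℝ)


abbrev Edge (d : ℕ) := Sym2 (Vtx d)

/-- `e` is an edge of the subgraph of `ℤ^d` induced on `V`: its endpoints are adjacent
lattice points, both belonging to `V`. -/
def IsSubgraphEdge {d : ℕ} (V : Finset (Vtx d)) (e : Edge d) : Prop :=
  ∃ x y : Vtx d, x ∈ V ∧ y ∈ V ∧ adj x y ∧ e = s(x, y)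

/-- The real spin configuration determined by `f` on `V` and `ξ` off `V`. -/
noncomputable def sOf {d : ℕ} (V : Finset (Vtx d)) (ξ : Vtx d → Spin)
    (f : ↥V → Spin) : Vtx d → ℝ :=
  fun x => if h : x ∈ V then sval (f ⟨x, h⟩) else sval (ξ x)

/-- Blume–Capel Boltzmann weight on the subgraph `G = (V,E)` of `ℤ^d` with boundary
condition `ξ`:  `exp(β Σ_{xy∈E} σ_x σ_y + Δ Σ_{x∈V} σ_x² + β Σ_{xy∈E^d,x∈V,y∉V} σ_x ξ_y)`. -/
noncomputable def bcW {d : ℕ} (V : Finset (Vtx d)) (E : Finset (Edge d)) (β Δ : ℝ)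
    (ξ : Vtx d → Spin) (f : ↥V → Spin) : ℝ :=
  Real.exp (β * ∑ e ∈ E,
      Sym2.lift ⟨fun x y => sOf V ξ f x * sOf V ξ f y, fun _ _ => mul_comm _ _⟩ e
    + Δ * ∑ x ∈ V, sOf V ξ f x ^ 2
    + β * ∑ x ∈ V, ∑ y ∈ nbrs x \ V, sOf V ξ f x * sval (ξ y))

/-- The `±1` value of an Ising spin. -/
def pm (b : Bool) : ℝ := if b then 1 else -1

/-- The real values of the lifted Ising configuration `τ` on `ℓ(V) = V × {0,1}`
(extended by `0` off `V`, which is immaterial). -/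
noncomputable def tOf {d : ℕ} (V : Finset (Vtx d)) (τ : ↥V × Bool → Bool) :
    Vtx d → Bool → ℝ :=
  fun x i => if h : x ∈ V then pm (τ (⟨x, h⟩, i)) else 0

/-- Ising Boltzmann weight on the lifted graph `ℓ(G)` with coupling constants
`J = β/4` on the edges of `E₁` and `J = (Δ + log 2)/2` on the edges of `E₂`, with
boundary condition `ℓ(ξ)`:
`exp(Σ_{uv∈E₁} (β/4) τ_u τ_v + Σ_{uv∈E₂} ((Δ+log2)/2) τ_u τ_v
   + Σ (β/4) τ_u ℓ(ξ)_v)`,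
where for a lattice edge `xy ∈ E` the four `E₁`-edges `{(x,i),(y,j)}` contribute
`Σ_{i,j∈{0,1}} τ_{(x,i)} τ_{(y,j)}`, and similarly for the boundary edges. -/
noncomputable def isingW {d : ℕ} (V : Finset (Vtx d)) (E : Finset (Edge d)) (β Δ : ℝ)
    (ξ : Vtx d → Spin) (τ : ↥V × Bool → Bool) : ℝ :=
  Real.exp (β / 4 * ∑ e ∈ E,
      Sym2.lift ⟨fun x y => ∑ i : Bool, ∑ j : Bool, tOf V τ x i * tOf V τ y j,
        fun x y => by
          show (∑ i : Bool, ∑ j : Bool, tOf V τ x i * tOf V τ y j)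
              = ∑ i : Bool, ∑ j : Bool, tOf V τ y i * tOf V τ x j
          rw [Finset.sum_comm]
          exact Finset.sum_congr rfl fun i _ =>
            Finset.sum_congr rfl fun j _ => mul_comm _ _⟩ e
    + (Δ + Real.log 2) / 2 * ∑ x ∈ V, tOf V τ x false * tOf V τ x true
    + β / 4 * ∑ x ∈ V, ∑ y ∈ nbrs x \ V,
        ∑ i : Bool, ∑ j : Bool, tOf V τ x i * sval (ξ y))

/-!
Write `T(τ)_x = (τ_{(x,0)} + τ_{(x,1)})/2`. On the fibre `T⁻¹(σ)` the Ising energy depends on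
`σ` only: the four `E₁`-edges above `xy` contribute `(β/4)(2σ_x)(2σ_y) = β σ_x σ_y`, and the
`E₂`-edge at `x` contributes `τ_{(x,0)} τ_{(x,1)} = 2σ_x² - 1`. Hence every `τ ∈ T⁻¹(σ)` has
Ising weight `bcW(σ) · 2^{Σ_x σ_x²} · e^{-(Δ + log 2)|V|/2}`. A site with `σ_x = 0` has two
preimages and one with `σ_x = ±1` has one, so `|T⁻¹(σ)| = 2^{Σ_x (1 - σ_x²)}` and the total
weight of the fibre is `2^{|V|} e^{-(Δ + log 2)|V|/2} · bcW(σ)`; the constant cancels in the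
ratio.
-/

open Finset

theorem div_sum_eq_sum_fiber_div_sum {α β K : Type*} [Fintype α] [Fintype β] [DecidableEq β]
    [Field K] (T : α → β) (W : α → K) (w : β → K) {c : K} (hc : c ≠ 0)
    (hW : ∀ b, ∑ a, (if T a = b then W a else 0) = c * w b) (b : β) :
    w b / ∑ b', w b' = (∑ a, if T a = b then W a else 0) / ∑ a, W a := by
  have hsum : ∑ a, W a = c * ∑ b', w b' := by
    rw [mul_sum, ← sum_congr rfl fun b' _ => hW b', sum_comm]
    simp
  rw [hW, hsum, mul_div_mul_left _ _ hc]

theorem sum_sym2_lift_eq_mul {α : Type*} {V : Finset α} {E : Finset (Sym2 α)}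
    (hE : ∀ e ∈ E, ∀ x ∈ e, x ∈ V) {F G : {f : α → α → ℝ // ∀ a b, f a b = f b a}}
    (c : ℝ)
    (h : ∀ x ∈ V, ∀ y ∈ V, F.1 x y = c * G.1 x y) :
    ∑ e ∈ E, Sym2.lift F e = c * ∑ e ∈ E, Sym2.lift G e := by
  rw [mul_sum]
  refine sum_congr rfl fun e he => ?_
  induction e using Sym2.ind with
  | h x y =>
    exact h x (hE _ he x (Sym2.mem_mk_left x y)) y (hE _ he y (Sym2.mem_mk_right x y))

theorem IsSubgraphEdge.mem {d : ℕ} {V : Finset (Vtx d)} {e : Edge d} (he : IsSubgraphEdge V e)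
    {x : Vtx d} (hx : x ∈ e) : x ∈ V := by
  obtain ⟨a, b, ha, hb, -, rfl⟩ := he
  rcases Sym2.mem_iff.1 hx with rfl | rfl <;> assumption

def pairSpin (a b : Bool) : Spin := if a = b then (if a then 2 else 0) else 1

lemma sval_pairSpin (a b : Bool) : sval (pairSpin a b) = (pm a + pm b) / 2 := by
  cases a <;> cases b <;> norm_num [pairSpin, pm, sval]

lemma sval_injective : Function.Injective sval := by
  intro s t h
  fin_cases s <;> fin_cases t <;> norm_num [sval] at h <;> rfl

lemma half_pm_add_pm_eq_sval_iff (a b : Bool) (s : Spin) :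
    (pm a + pm b) / 2 = sval s ↔ pairSpin a b = s := by
  rw [← sval_pairSpin, sval_injective.eq_iff]

lemma pm_mul_pm (a b : Bool) : pm a * pm b = 2 * sval (pairSpin a b) ^ 2 - 1 := by
  cases a <;> cases b <;> norm_num [pairSpin, pm, sval]

lemma card_pairSpin_fiber_mul_exp (s : Spin) :
    (#{h : Bool → Bool | pairSpin (h false) (h true) = s} : ℝ)
      * Real.exp (Real.log 2 * sval s ^ 2) = 2 := by
  have hcard : #{h : Bool → Bool | pairSpin (h false) (h true) = s} = if s = 1 then 2 else 1 := by
    fin_cases s <;> decide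
  rw [hcard]
  fin_cases s <;> norm_num [sval, Real.exp_log]

theorem card_filter_forall_curry {ι κ γ : Type*} [Fintype ι] [DecidableEq ι] [Fintype κ]
    [DecidableEq κ] [Fintype γ] (p : ι → (κ → γ) → Prop) [∀ x, DecidablePred (p x)] :
    #{τ : ι × κ → γ | ∀ x, p x fun i => τ (x, i)} = ∏ x, #{h : κ → γ | p x h} := by
  rw [← Fintype.card_piFinset]
  refine card_bij' (fun τ _ => Function.curry τ) (fun g _ => Function.uncurry g)
    (fun τ hτ => Fintype.mem_piFinset.2 fun x =>
      mem_filter.2 ⟨mem_univ _, (mem_filter.1 hτ).2 x⟩)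
    (fun g hg => by simpa [Fintype.mem_piFinset] using hg)
    (fun τ _ => Function.uncurry_curry τ) (fun g _ => Function.curry_uncurry g)

def collapse {ι : Type*} (τ : ι × Bool → Bool) : ι → Spin :=
  fun x => pairSpin (τ (x, false)) (τ (x, true))

lemma card_collapse_eq {ι : Type*} [Fintype ι] [DecidableEq ι] (f : ι → Spin) :
    #{τ : ι × Bool → Bool | collapse τ = f}
      = ∏ x, #{h : Bool → Bool | pairSpin (h false) (h true) = f x} := by
  simp only [collapse, funext_iff]
  exact card_filter_forall_curry fun x h => pairSpin (h false) (h true) = f x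

section Fiber

variable {d : ℕ} {V : Finset (Vtx d)} {ξ : Vtx d → Spin} {τ : ↥V × Bool → Bool}
  {f : ↥V → Spin}

lemma sum_tOf_of_collapse_eq (h : collapse τ = f) {x : Vtx d} (hx : x ∈ V) :
    ∑ i, tOf V τ x i = 2 * sOf V ξ f x := by
  subst h
  simp only [tOf, sOf, dif_pos hx, Fintype.sum_bool, collapse, sval_pairSpin]
  ring

lemma tOf_mul_tOf_of_collapse_eq (h : collapse τ = f) {x : Vtx d} (hx : x ∈ V) :
    tOf V τ x false * tOf V τ x true = 2 * sOf V ξ f x ^ 2 - 1 := by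
  subst h
  simp only [tOf, sOf, dif_pos hx, collapse, pm_mul_pm]

lemma isingW_of_collapse_eq {E : Finset (Edge d)} (hE : ∀ e ∈ E, IsSubgraphEdge V e)
    (β Δ : ℝ) (h : collapse τ = f) :
    isingW V E β Δ ξ τ = bcW V E β Δ ξ f *
      Real.exp (Real.log 2 * ∑ x ∈ V, sOf V ξ f x ^ 2 - (Δ + Real.log 2) / 2 * #V) := by
  unfold isingW
  rw [sum_sym2_lift_eq_mul (fun e he _ hx => (hE e he).mem hx)
    (G := ⟨fun x y => sOf V ξ f x * sOf V ξ f y, fun _ _ => mul_comm _ _⟩) 4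
    fun x hx y hy => by
      simp only [← sum_mul_sum, sum_tOf_of_collapse_eq (ξ := ξ) h hx,
        sum_tOf_of_collapse_eq (ξ := ξ) h hy]
      ring]
  have hsite : ∑ x ∈ V, tOf V τ x false * tOf V τ x true
      = 2 * ∑ x ∈ V, sOf V ξ f x ^ 2 - #V := by
    rw [sum_congr rfl fun x hx => tOf_mul_tOf_of_collapse_eq (ξ := ξ) h hx, sum_sub_distrib,
      mul_sum]
    simp
  have hbdry : ∑ x ∈ V, ∑ y ∈ nbrs x \ V, ∑ i, ∑ j : Bool, tOf V τ x i * sval (ξ y)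
      = 4 * ∑ x ∈ V, ∑ y ∈ nbrs x \ V, sOf V ξ f x * sval (ξ y) := by
    simp only [mul_sum]
    refine sum_congr rfl fun x hx => sum_congr rfl fun y _ => ?_
    simp only [sum_const, card_univ, Fintype.card_bool, nsmul_eq_mul, ← mul_sum, ← sum_mul,
      sum_tOf_of_collapse_eq (ξ := ξ) h hx]
    ring
  rw [hsite, hbdry, bcW, ← Real.exp_add]
  ring_nf

lemma sum_isingW_collapse_eq {E : Finset (Edge d)} (hE : ∀ e ∈ E, IsSubgraphEdge V e)
    (β Δ : ℝ) (f : ↥V → Spin) :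
    ∑ τ, (if collapse τ = f then isingW V E β Δ ξ τ else 0)
      = 2 ^ #V * Real.exp (-((Δ + Real.log 2) / 2) * #V) * bcW V E β Δ ξ f := by
  have hsq : ∑ x ∈ V, sOf V ξ f x ^ 2 = ∑ x : V, sval (f x) ^ 2 := by
    rw [← sum_coe_sort V]
    simp [sOf]
  calc ∑ τ, (if collapse τ = f then isingW V E β Δ ξ τ else 0)
      = #{τ | collapse τ = f} * (bcW V E β Δ ξ f *
          Real.exp (Real.log 2 * ∑ x ∈ V, sOf V ξ f x ^ 2 - (Δ + Real.log 2) / 2 * #V)) := by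
        rw [← sum_filter,
          sum_congr rfl fun τ hτ => isingW_of_collapse_eq hE β Δ (mem_filter.1 hτ).2,
          sum_const, nsmul_eq_mul]
    _ = (∏ x, (#{h : Bool → Bool | pairSpin (h false) (h true) = f x} : ℝ) *
          Real.exp (Real.log 2 * sval (f x) ^ 2)) *
          Real.exp (-((Δ + Real.log 2) / 2) * #V) * bcW V E β Δ ξ f := by
        rw [card_collapse_eq, hsq, sub_eq_add_neg, Real.exp_add, mul_sum, Real.exp_sum,
          prod_mul_distrib]
        push_cast
        ring_nf
    _ = 2 ^ #V * Real.exp (-((Δ + Real.log 2) / 2) * #V) * bcW V E β Δ ξ f := by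
        simp [card_pairSpin_fiber_mul_exp]

end Fiber

open scoped Classical in
theorem blume_capel_to_ising_general (d : ℕ) (V : Finset (Vtx d)) (E : Finset (Edge d))
    (hE : ∀ e ∈ E, IsSubgraphEdge V e) (β Δ : ℝ)
    (ξ : Vtx d → Spin) (η : ↥V → Spin) :
    bcW V E β Δ ξ η / (∑ f : ↥V → Spin, bcW V E β Δ ξ f)
      = (∑ τ : ↥V × Bool → Bool,
          if ∀ x : ↥V, (pm (τ (x, false)) + pm (τ (x, true))) / 2 = sval (η x)
          then isingW V E β Δ ξ τ else 0)
        / ∑ τ : ↥V × Bool → Bool, isingW V E β Δ ξ τ := by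
  have hfiber : ∀ τ : ↥V × Bool → Bool,
      (∀ x, (pm (τ (x, false)) + pm (τ (x, true))) / 2 = sval (η x)) ↔ collapse τ = η :=
    fun τ => by simp only [funext_iff, collapse, half_pm_add_pm_eq_sval_iff]
  simp only [hfiber]
  exact div_sum_eq_sum_fiber_div_sum collapse (isingW V E β Δ ξ) (bcW V E β Δ ξ)
    (by positivity) (sum_isingW_collapse_eq hE β Δ) η

open scoped Classical in
/-- **Lemma 4.2** (Combinatorial mapping from Blume–Capel to Ising).  Let `G = (V,E)` be
a finite subgraph of `ℤ^d`, `β > 0`, `Δ ∈ ℝ` and `ξ ∈ {-1,0,1}^{ℤ^d}`.  Then, for every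
`η ∈ {-1,0,1}^V`,
`μ^ξ_{G,β,Δ}(σ = η) = μ^{Ising,ℓ(ξ)}_{ℓ(G),J}(τ ∈ T⁻¹(η))`,
where `T(τ)_x = (τ_{(x,0)} + τ_{(x,1)})/2`. -/
theorem blume_capel_to_ising (d : ℕ) (V : Finset (Vtx d)) (E : Finset (Edge d))
    (hE : ∀ e ∈ E, IsSubgraphEdge V e) (β Δ : ℝ) (hβ : 0 < β)
    (ξ : Vtx d → Spin) (η : ↥V → Spin) :
    bcW V E β Δ ξ η / (∑ f : ↥V → Spin, bcW V E β Δ ξ f)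
      = (∑ τ : ↥V × Bool → Bool,
          if ∀ x : ↥V, (pm (τ (x, false)) + pm (τ (x, true))) / 2 = sval (η x)
          then isingW V E β Δ ξ τ else 0)
        / ∑ τ : ↥V × Bool → Bool, isingW V E β Δ ξ τ :=
  blume_capel_to_ising_general d V E hE β Δ ξ η

end BCIsing
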